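/- Let K be a field and let P, Q, R be homogeneous polynomials in K[u,v] of the same degree n with no common factor. If (p₁,q₁,r₁) and (p₂,q₂,r₂) form a homogeneous basis of the (free, rank 2) graded syzygy module of P, Q, R, then deg(p₁,q₁,r₁) + deg(p₂,q₂,r₂) = n. -/

import Mathlib

/-!
Both basis syzygies `s, t` are orthogonal to `F = (P, Q, R)`, so their cross product
`c = s ⨯₃ t`, whose coordinates are homogeneous of degree `d₁ + d₂`, is parallel to `F`.
The coordinates of `c` have no common factor: if `π ≠ 0` divided all of them, it would divide
`eᵢ ⨯₃ c = t i • s - s i • t`; as the syzygy module is saturated, `π` then divides the basis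
coordinates `t i` and `s i`, so `π ∣ s` and finally `π ∣ 1`. Two parallel primitive vectors
over a UFD have associated coordinates, so a nonzero coordinate of `F`, of degree `n`, is
associated to one of `c`, of degree `d₁ + d₂`.
-/

open MvPolynomial

/-- The module of syzygies between three bivariate polynomials `P, Q, R`:
triples `(p, q, r)` with `p*P + q*Q + r*R = 0`, as a submodule of `(K[u,v])³`. -/
noncomputable def syzygyModule₂ {K : Type*} [Field K]
    (P Q R : MvPolynomial (Fin 2) K) :
    Submodule (MvPolynomial (Fin 2) K) (Fin 3 → MvPolynomial (Fin 2) K) :=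
  LinearMap.ker
    (P • (LinearMap.proj 0 :
        (Fin 3 → MvPolynomial (Fin 2) K) →ₗ[MvPolynomial (Fin 2) K] MvPolynomial (Fin 2) K)
      + Q • (LinearMap.proj 1 :
        (Fin 3 → MvPolynomial (Fin 2) K) →ₗ[MvPolynomial (Fin 2) K] MvPolynomial (Fin 2) K)
      + R • (LinearMap.proj 2 :
        (Fin 3 → MvPolynomial (Fin 2) K) →ₗ[MvPolynomial (Fin 2) K] MvPolynomial (Fin 2) K))

open Matrix

def IsPrimitiveVector {α ι : Type*} [Monoid α] (v : ι → α) : Prop :=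
  ∀ d, (∀ i, d ∣ v i) → IsUnit d

theorem IsPrimitiveVector.exists_ne_zero {α ι : Type*} [MonoidWithZero α] [Nontrivial α]
    {v : ι → α} (hv : IsPrimitiveVector v) : ∃ i, v i ≠ 0 := by
  by_contra! h
  exact not_isUnit_zero (hv 0 fun i => (h i).symm ▸ dvd_zero 0)

theorem IsPrimitiveVector.dvd_of_forall_dvd_mul {α ι : Type*} [CommMonoidWithZero α]
    [IsGCDMonoid α] [Fintype ι] {v : ι → α} (hv : IsPrimitiveVector v) {k a : α}
    (h : ∀ i, k ∣ a * v i) : k ∣ a := by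
  obtain ⟨_⟩ : Nonempty (NormalizedGCDMonoid α) := inferInstance
  have hgcd : IsUnit (Finset.univ.gcd v) := hv _ fun i => Finset.gcd_dvd (Finset.mem_univ i)
  calc k ∣ Finset.univ.gcd (fun i => a * v i) := Finset.dvd_gcd fun i _ => h i
    _ ∣ a * Finset.univ.gcd v := (Finset.gcd_mul_left' _ _ a).dvd
    _ ∣ a := (associated_mul_unit_left a _ hgcd).dvd

section CrossProduct

variable {R : Type*} [CommRing R]

theorem single_cross_cross (s t : Fin 3 → R) (i : Fin 3) :
    Pi.single i 1 ⨯₃ (s ⨯₃ t) = t i • s - s i • t := by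
  rw [cross_cross_eq_smul_sub_smul', single_dotProduct, dotProduct_single, one_mul, mul_one]

theorem dvd_cross_apply_of_forall_dvd {π : R} {w : Fin 3 → R} (h : ∀ k, π ∣ w k)
    (u : Fin 3 → R) (k : Fin 3) : π ∣ (u ⨯₃ w) k := by
  fin_cases k <;>
    exact dvd_sub (dvd_mul_of_dvd_right (h _) _) (dvd_mul_of_dvd_right (h _) _)

theorem cross_cross_eq_zero_of_dotProduct_eq_zero {u v w : Fin 3 → R}
    (hu : u ⬝ᵥ w = 0) (hv : v ⬝ᵥ w = 0) : u ⨯₃ v ⨯₃ w = 0 := by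
  rw [cross_cross_eq_smul_sub_smul, hu, hv, zero_smul, zero_smul, sub_zero]

theorem dvd_of_cross_eq_zero [IsGCDMonoid R] {u v : Fin 3 → R} (h : u ⨯₃ v = 0)
    (hu : IsPrimitiveVector u) (i : Fin 3) : u i ∣ v i := by
  refine hu.dvd_of_forall_dvd_mul fun j => ⟨v j, ?_⟩
  have := congrFun (single_cross_cross u v i) j
  rw [h, map_zero] at this
  simpa [sub_eq_zero, eq_comm] using this

theorem associated_of_cross_eq_zero [IsDomain R] [IsGCDMonoid R] {u v : Fin 3 → R}
    (h : u ⨯₃ v = 0) (hu : IsPrimitiveVector u) (hv : IsPrimitiveVector v) (i : Fin 3) :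
    Associated (u i) (v i) :=
  have h' : v ⨯₃ u = 0 := by rw [← cross_anticomm, h, neg_zero]
  associated_of_dvd_dvd (dvd_of_cross_eq_zero h hu i) (dvd_of_cross_eq_zero h' hv i)

end CrossProduct

section Saturation

variable {R N ι κ : Type*} [CommRing R] [IsDomain R] [AddCommGroup N] [Module R N]
  [Module.IsTorsionFree R N]

theorem dvd_basis_repr_of_forall_dvd {f : (ι → R) →ₗ[R] N}
    (b : Module.Basis κ R (LinearMap.ker f)) {π : R} (hπ : π ≠ 0) {v : LinearMap.ker f}
    (hv : ∀ i, π ∣ (v : ι → R) i) (k : κ) : π ∣ b.repr v k := by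
  choose w hw using hv
  have hvw : (v : ι → R) = π • w := funext hw
  have hw_mem : w ∈ LinearMap.ker f := by
    rw [LinearMap.mem_ker, ← smul_eq_zero_iff_right hπ, ← map_smul, ← hvw]
    exact v.2
  rw [show v = π • ⟨w, hw_mem⟩ from Subtype.ext hvw, map_smul]
  exact ⟨_, rfl⟩

theorem isPrimitiveVector_cross_basis {f : (Fin 3 → R) →ₗ[R] N}
    (b : Module.Basis (Fin 2) R (LinearMap.ker f)) {p : R} (hp : p ≠ 0) (hpu : ¬IsUnit p) :
    IsPrimitiveVector ((b 0 : Fin 3 → R) ⨯₃ b 1) := by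
  set s : Fin 3 → R := (b 0 : Fin 3 → R)
  set t : Fin 3 → R := (b 1 : Fin 3 → R)
  have key : ∀ π ≠ 0, (∀ k, π ∣ (s ⨯₃ t) k) → IsUnit π := by
    intro π hπ h
    have hs : ∀ i, π ∣ s i := by
      intro i
      have hv : ∀ j, π ∣ ((t i • b 0 - s i • b 1 : LinearMap.ker f) : Fin 3 → R) j := by
        have := dvd_cross_apply_of_forall_dvd h (Pi.single i 1)
        rwa [single_cross_cross] at this
      simpa using dvd_basis_repr_of_forall_dvd b hπ hv 1
    exact isUnit_of_dvd_one (by simpa using dvd_basis_repr_of_forall_dvd b hπ hs 0)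
  intro π h
  -- if `0` divides every coordinate they all vanish, so the non-unit `p` divides them too
  rcases eq_or_ne π 0 with rfl | hπ
  · exact absurd (key p hp fun k => (zero_dvd_iff.1 (h k)).symm ▸ dvd_zero p) hpu
  · exact key π hπ h

end Saturation

theorem MvPolynomial.IsHomogeneous.cross_apply {σ R : Type*} [CommRing R]
    {s t : Fin 3 → MvPolynomial σ R} {m n : ℕ} (hs : ∀ i, (s i).IsHomogeneous m)
    (ht : ∀ i, (t i).IsHomogeneous n) (k : Fin 3) : ((s ⨯₃ t) k).IsHomogeneous (m + n) := by
  have h : ∀ i j, (s i * t j).IsHomogeneous (m + n) := fun i j => (hs i).mul (ht j)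
  fin_cases k <;> exact (h _ _).sub (h _ _)

theorem MvPolynomial.IsHomogeneous.eq_of_associated {σ R : Type*} [CommRing R] [IsDomain R]
    {φ ψ : MvPolynomial σ R} {m n : ℕ} (hφ : φ.IsHomogeneous m) (hψ : ψ.IsHomogeneous n)
    (h : Associated φ ψ) (hψ0 : ψ ≠ 0) : m = n := by
  have hφ0 : φ ≠ 0 := h.ne_zero_iff.2 hψ0
  rw [← hφ.totalDegree hφ0, ← hψ.totalDegree hψ0]
  exact le_antisymm (totalDegree_le_of_dvd_of_isDomain h.dvd hψ0)
    (totalDegree_le_of_dvd_of_isDomain h.symm.dvd hφ0)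

theorem mem_syzygyModule₂_iff {K : Type*} [Field K] {P Q R : MvPolynomial (Fin 2) K}
    {v : Fin 3 → MvPolynomial (Fin 2) K} :
    v ∈ syzygyModule₂ P Q R ↔ v ⬝ᵥ ![P, Q, R] = 0 := by
  rw [vec3_dotProduct]
  simp [syzygyModule₂, mul_comm]

theorem homogeneous_syzygy_basis_degrees_add_to_n {K : Type*} [Field K]
    (n d₁ d₂ : ℕ) (P Q R p₁ q₁ r₁ p₂ q₂ r₂ : MvPolynomial (Fin 2) K)
    (hP : P.IsHomogeneous n) (hQ : Q.IsHomogeneous n) (hR : R.IsHomogeneous n)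
    (hcop : ∀ d : MvPolynomial (Fin 2) K, d ∣ P → d ∣ Q → d ∣ R → IsUnit d)
    (hp₁ : p₁.IsHomogeneous d₁) (hq₁ : q₁.IsHomogeneous d₁) (hr₁ : r₁.IsHomogeneous d₁)
    (hp₂ : p₂.IsHomogeneous d₂) (hq₂ : q₂.IsHomogeneous d₂) (hr₂ : r₂.IsHomogeneous d₂)
    (h₁ : (![p₁, q₁, r₁] : Fin 3 → MvPolynomial (Fin 2) K) ∈ syzygyModule₂ P Q R)
    (h₂ : (![p₂, q₂, r₂] : Fin 3 → MvPolynomial (Fin 2) K) ∈ syzygyModule₂ P Q R)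
    (b : Module.Basis (Fin 2) (MvPolynomial (Fin 2) K) (syzygyModule₂ P Q R))
    (hb0 : b 0 = ⟨![p₁, q₁, r₁], h₁⟩) (hb1 : b 1 = ⟨![p₂, q₂, r₂], h₂⟩) :
    d₁ + d₂ = n := by
  set c : Fin 3 → MvPolynomial (Fin 2) K := (b 0 : Fin 3 → _) ⨯₃ b 1
  have hF : IsPrimitiveVector ![P, Q, R] := fun d hd => hcop d (hd 0) (hd 1) (hd 2)
  have hX : ¬IsUnit (X 0 : MvPolynomial (Fin 2) K) := X_prime.not_isUnit
  have hc : IsPrimitiveVector c := isPrimitiveVector_cross_basis b (X_ne_zero 0) hX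
  have hcF : c ⨯₃ ![P, Q, R] = 0 := cross_cross_eq_zero_of_dotProduct_eq_zero
    (mem_syzygyModule₂_iff.1 (b 0).2) (mem_syzygyModule₂_iff.1 (b 1).2)
  have hc_hom : ∀ k, (c k).IsHomogeneous (d₁ + d₂) := by
    refine IsHomogeneous.cross_apply ?_ ?_ <;> intro i <;>
      simp only [hb0, hb1] <;> fin_cases i <;> assumption
  obtain ⟨i, hi⟩ := hF.exists_ne_zero
  have hF_hom : (![P, Q, R] i).IsHomogeneous n := by fin_cases i <;> assumption
  exact (hc_hom i).eq_of_associated hF_hom (associated_of_cross_eq_zero hcF hc hF i) hi
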